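/- Alternative combinatorial representation of the Barlow–Proschan importance: for every structure function φ on n components and every index i, I_i^{BP}(φ) = (1/n) · Σ_{r=1}^{n} n_r(i) · C(n−1, r−1)^{−1}, where C(n−1,r−1) is the binomial coefficient. -/

import Mathlib

/-!
Conditioning on component `i`, `h(1_i, p) - h(0_i, p)` is the sum over the states `x` of the
other components of `p ^ k (1 - p) ^ (n - 1 - k) (φ(1_i, x) - φ(0_i, x))`, where `k` is the number
of working components in `x`. The Beta integral
`∫₀¹ p ^ k (1 - p) ^ m dp = 1 / ((k + m + 1) C(k + m, k))` turns each term into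
`(n C(n - 1, k))⁻¹ (φ(1_i, x) - φ(0_i, x))`, and grouping the states by `k` gives the critical
path vector counts.
-/

/-- The reliability function (multilinear extension) of a structure function φ. -/
def rel (n : ℕ) (φ : (Fin n → Bool) → Bool) (p : Fin n → ℝ) : ℝ :=
  ∑ x : Fin n → Bool,
    (∏ j : Fin n, if x j then p j else 1 - p j) * (if φ x then 1 else 0)

/-- The number `n_r(i)` of critical path vectors of size `r` for component `i`. -/
def ncrit (n : ℕ) (φ : (Fin n → Bool) → Bool) (i : Fin n) (r : ℕ) : ℤ :=
  ∑ x ∈ Finset.univ.filter (fun x : Fin n → Bool =>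
      x i = false ∧
        (Finset.univ.filter (fun j : Fin n => j ≠ i ∧ x j = true)).card = r - 1),
    ((if φ (Function.update x i true) then (1 : ℤ) else 0)
      - (if φ (Function.update x i false) then (1 : ℤ) else 0))

open Finset Function intervalIntegral

theorem integral_pow_mul_one_sub_pow (k m : ℕ) :
    ∫ p in (0 : ℝ)..1, p ^ k * (1 - p) ^ m =
      (k.factorial * m.factorial : ℝ) / (k + m + 1).factorial := by
  induction m generalizing k with
  | zero =>
    simp only [pow_zero, mul_one, add_zero, integral_pow, one_pow, ne_eq, Nat.succ_ne_zero,
      not_false_eq_true, zero_pow, sub_zero, Nat.factorial_zero, Nat.factorial_succ]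
    push_cast
    field_simp
  | succ m ih =>
    have hsplit (p : ℝ) :
        p ^ k * (1 - p) ^ (m + 1) = p ^ k * (1 - p) ^ m - p ^ (k + 1) * (1 - p) ^ m := by ring
    simp_rw [hsplit]
    rw [integral_sub ((by fun_prop : Continuous _).intervalIntegrable _ _)
      ((by fun_prop : Continuous _).intervalIntegrable _ _), ih, ih,
      show k + 1 + m + 1 = k + (m + 1) + 1 by omega]
    simp only [Nat.factorial_succ, show k + (m + 1) = k + m + 1 by omega]
    push_cast
    field_simp
    ring

theorem integral_pow_mul_one_sub_pow_eq_inv (k m : ℕ) :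
    ∫ p in (0 : ℝ)..1, p ^ k * (1 - p) ^ m =
      (((k + m + 1) * (k + m).choose k : ℕ) : ℝ)⁻¹ := by
  have h := Nat.add_choose_mul_factorial_mul_factorial m k
  rw [add_comm m k] at h
  rw [integral_pow_mul_one_sub_pow, Nat.factorial_succ, ← h]
  push_cast
  field_simp

theorem Finset.sum_filter_apply_eq_sum_update {ι M : Type*} [Fintype ι] [DecidableEq ι]
    [AddCommMonoid M] (i : ι) (b : Bool) (f : (ι → Bool) → M) :
    ∑ x with x i = b, f x = ∑ x with x i = false, f (update x i b) := by
  refine (sum_nbij' (fun x : ι → Bool => update x i b)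
    (fun x => update x i false) ?_ ?_ ?_ ?_ fun _ _ => rfl).symm <;>
    intro x hx <;> simp_all

theorem Finset.prod_ite_bool_eq_pow_mul_pow {ι R : Type*} [CommMonoid R] (s : Finset ι)
    (x : ι → Bool) (p q : R) :
    ∏ j ∈ s, (if x j then p else q) = p ^ #{j ∈ s | x j} * q ^ #{j ∈ s | ¬x j} := by
  rw [prod_ite, prod_const, prod_const]

section

variable {n : ℕ}

def numWorkingExcept (i : Fin n) (x : Fin n → Bool) : ℕ :=
  #{j : Fin n | j ≠ i ∧ x j = true}

def crit (φ : (Fin n → Bool) → Bool) (i : Fin n) (x : Fin n → Bool) : ℤ :=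
  (if φ (update x i true) then 1 else 0) - (if φ (update x i false) then 1 else 0)

theorem card_filter_erase_eq_numWorkingExcept (i : Fin n) (x : Fin n → Bool) :
    #{j ∈ univ.erase i | x j} = numWorkingExcept i x := by
  unfold numWorkingExcept
  congr 1
  ext j
  simp [and_comm]

theorem numWorkingExcept_le (i : Fin n) (x : Fin n → Bool) : numWorkingExcept i x ≤ n - 1 := by
  rw [← card_filter_erase_eq_numWorkingExcept]
  simpa using card_filter_le (univ.erase i) (fun j => x j = true)

theorem card_filter_erase_not (i : Fin n) (x : Fin n → Bool) :
    #{j ∈ univ.erase i | ¬x j} = n - 1 - numWorkingExcept i x := by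
  have h := card_filter_add_card_filter_not (s := univ.erase i) (p := fun j => x j = true)
  rw [card_filter_erase_eq_numWorkingExcept, card_erase_of_mem (mem_univ i), card_univ,
    Fintype.card_fin] at h
  omega

theorem numWorkingExcept_update (i : Fin n) (x : Fin n → Bool) (b : Bool) :
    numWorkingExcept i (update x i b) = numWorkingExcept i x := by
  unfold numWorkingExcept
  congr 1
  refine filter_congr fun j _ => ?_
  simp +contextual

theorem prod_update_const_eq_ite (i : Fin n) (x : Fin n → Bool) (p : ℝ) (b : Bool) :
    ∏ j, (if x j then update (fun _ => p) i (if b then 1 else 0) j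
        else 1 - update (fun _ => p) i (if b then 1 else 0) j) =
      if x i = b then p ^ numWorkingExcept i x * (1 - p) ^ (n - 1 - numWorkingExcept i x)
      else 0 := by
  rw [← mul_prod_erase univ _ (mem_univ i), prod_congr rfl fun j hj => by
    rw [update_of_ne (ne_of_mem_erase hj)], prod_ite_bool_eq_pow_mul_pow,
    card_filter_erase_eq_numWorkingExcept, card_filter_erase_not]
  cases b <;> cases x i <;> simp

theorem rel_update_bool (φ : (Fin n → Bool) → Bool) (i : Fin n) (p : ℝ) (b : Bool) :
    rel n φ (update (fun _ => p) i (if b then 1 else 0)) =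
      ∑ x with x i = false, p ^ numWorkingExcept i x * (1 - p) ^ (n - 1 - numWorkingExcept i x) *
        (if φ (update x i b) then 1 else 0) := by
  simp_rw [rel, prod_update_const_eq_ite, ite_mul, zero_mul]
  rw [← sum_filter, sum_filter_apply_eq_sum_update]
  simp_rw [numWorkingExcept_update]

theorem rel_update_one_sub_rel_update_zero (φ : (Fin n → Bool) → Bool) (i : Fin n) (p : ℝ) :
    rel n φ (update (fun _ => p) i 1) - rel n φ (update (fun _ => p) i 0) =
      ∑ x with x i = false,
        p ^ numWorkingExcept i x * (1 - p) ^ (n - 1 - numWorkingExcept i x) *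
          (crit φ i x : ℝ) := by
  have h₁ := rel_update_bool φ i p true
  have h₀ := rel_update_bool φ i p false
  simp only [if_true, Bool.false_eq_true, if_false] at h₁ h₀
  rw [h₁, h₀, ← sum_sub_distrib]
  refine sum_congr rfl fun x _ => ?_
  push_cast [crit]
  ring

theorem sum_mul_crit_eq_sum_mul_ncrit (φ : (Fin n → Bool) → Bool) (i : Fin n)
    (g : ℕ → ℝ) :
    ∑ x with x i = false, g (numWorkingExcept i x) * (crit φ i x : ℝ) =
      ∑ r ∈ Icc 1 n, g (r - 1) * (ncrit n φ i r : ℝ) := by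
  have hmaps : ∀ x ∈ ({x | x i = false} : Finset (Fin n → Bool)),
      numWorkingExcept i x + 1 ∈ Icc 1 n := fun x _ => by
    have := numWorkingExcept_le i x
    have := i.pos
    simp only [mem_Icc]
    omega
  rw [← sum_fiberwise_of_maps_to hmaps]
  refine sum_congr rfl fun r hr => ?_
  have hr : 1 ≤ r := (mem_Icc.1 hr).1
  rw [ncrit, Int.cast_sum, mul_sum, filter_filter]
  refine sum_congr (filter_congr fun x _ => ?_) fun x hx => ?_
  · refine and_congr_right fun _ => ?_
    change numWorkingExcept i x + 1 = r ↔ numWorkingExcept i x = r - 1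
    omega
  · have hk : numWorkingExcept i x = r - 1 := (mem_filter.1 hx).2.2
    rw [hk]
    rfl

end

/-- Alternative combinatorial representation of the Barlow–Proschan importance:
`I_i^{BP}(φ) = (1/n) · Σ_{r=1}^{n} n_r(i) · C(n−1, r−1)⁻¹`. -/
theorem barlow_proschan_alt (n : ℕ) (φ : (Fin n → Bool) → Bool) (i : Fin n) :
    (∫ p in (0 : ℝ)..1,
        (rel n φ (Function.update (fun _ => p) i 1)
          - rel n φ (Function.update (fun _ => p) i 0)))
      = (1 / (n : ℝ)) * ∑ r ∈ Finset.Icc 1 n,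
          (ncrit n φ i r : ℝ) * ((Nat.choose (n - 1) (r - 1) : ℝ))⁻¹ := by
  simp_rw [rel_update_one_sub_rel_update_zero]
  rw [integral_finsetSum fun x _ => (by fun_prop : Continuous _).intervalIntegrable _ _]
  have hn : n - 1 + 1 = n := Nat.sub_add_cancel i.pos
  have hbeta (x : Fin n → Bool) :
      ∫ p in (0 : ℝ)..1, p ^ numWorkingExcept i x * (1 - p) ^ (n - 1 - numWorkingExcept i x) =
        ((n : ℝ) * (n - 1).choose (numWorkingExcept i x))⁻¹ := by
    rw [integral_pow_mul_one_sub_pow_eq_inv, Nat.add_sub_cancel' (numWorkingExcept_le i x), hn]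
    push_cast
    rfl
  simp_rw [integral_mul_const, hbeta, sum_mul_crit_eq_sum_mul_ncrit φ i
    (fun k => ((n : ℝ) * (n - 1).choose k)⁻¹), mul_sum]
  refine sum_congr rfl fun r _ => ?_
  rw [mul_inv]
  ring
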